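/- arXiv:1910.10868 — 4 statements merged into one kernel-verified Lean document; each statement's English description precedes it below -/
import Mathlib

section
/- Let (Ω, F, ℙ) be a probability space, M ≥ 0 a constant, and U : Ω → [0,1] a random variable such that ℙ(U ≤ t) ≤ M·t for every t ∈ [0,1]. Let G : [0,1] → (0,∞) be a non-increasing function and let c > 0. Then E[ 1{U ≤ c·G(U)} / G(U) ] ≤ c·M, where 1{·} denotes the indicator function. -/
/-!
Let `t` be the supremum of the `u ∈ [0,1]` with `u ≤ c·G(u)`. Since `G` is non-increasing,
every such `u` also satisfies `t ≤ c·G(u)`, so on `{U ≤ c·G(U)} ⊆ {U ≤ t}` the integrand is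
at most `c/t`. Hence the expectation is at most `ℙ(U ≤ t)·c/t ≤ M·t·c/t = c·M`. The event
`U = 0`, where `t` may vanish, is null because `ℙ(U ≤ 0) ≤ M·0`.
-/

open MeasureTheory Set

theorem sSup_sep_le_apply_of_antitoneOn {α : Type*} [ConditionallyCompleteLinearOrder α]
    {s : Set α} {g : α → α} (hg : AntitoneOn g s) {u : α} (hu : u ∈ s) (hug : u ≤ g u) :
    sSup {x ∈ s | x ≤ g x} ≤ g u := by
  refine csSup_le ⟨u, hu, hug⟩ fun x ⟨hx, hxg⟩ => ?_
  rcases le_total x u with hxu | hux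
  · exact hxu.trans hug
  · exact hxg.trans (hg hu hx hux)

theorem inv_le_div_of_le_mul {a c t : ℝ} (ha : 0 < a) (ht : 0 < t) (h : t ≤ c * a) :
    a⁻¹ ≤ c / t := by
  rw [le_div_iff₀ ht, inv_mul_le_iff₀ ha, mul_comm]
  exact h

theorem integral_le_measureReal_mul_of_ae_le_indicator {Ω : Type*} [MeasurableSpace Ω]
    {μ : Measure Ω} [IsFiniteMeasure μ] {f : Ω → ℝ} {s : Set Ω} (hs : MeasurableSet s) {K : ℝ}
    (hf : 0 ≤ᵐ[μ] f) (hfK : f ≤ᵐ[μ] s.indicator fun _ => K) :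
    ∫ ω, f ω ∂μ ≤ μ.real s * K :=
  calc ∫ ω, f ω ∂μ ≤ ∫ ω, s.indicator (fun _ => K) ω ∂μ :=
        integral_mono_of_nonneg hf ((integrable_const K).indicator hs) hfK
    _ = μ.real s * K := integral_indicator_const K hs

theorem ae_lt_of_measureReal_setOf_le_nonpos {Ω : Type*} [MeasurableSpace Ω] {μ : Measure Ω}
    [IsFiniteMeasure μ] {U : Ω → ℝ} {a : ℝ} (h : μ.real {ω | U ω ≤ a} ≤ 0) :
    ∀ᵐ ω ∂μ, a < U ω := by
  have hnull : μ {ω | U ω ≤ a} = 0 := (measureReal_eq_zero_iff).mp (h.antisymm measureReal_nonneg)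
  filter_upwards [measure_eq_zero_iff_ae_notMem.mp hnull] with ω hω
  exact lt_of_not_ge hω

-- `0` when no `u` qualifies, as `sSup ∅ = 0` in `ℝ`.
noncomputable def crossingPoint (c : ℝ) (G : ℝ → ℝ) : ℝ :=
  sSup {u ∈ Icc (0 : ℝ) 1 | u ≤ c * G u}

section CrossingPoint

variable {c : ℝ} {G : ℝ → ℝ}

theorem crossingPoint_mem_Icc : crossingPoint c G ∈ Icc (0 : ℝ) 1 :=
  ⟨Real.sSup_nonneg fun _ hu => hu.1.1, Real.sSup_le (fun _ hu => hu.1.2) zero_le_one⟩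

theorem le_crossingPoint {u : ℝ} (hu : u ∈ Icc (0 : ℝ) 1) (huG : u ≤ c * G u) :
    u ≤ crossingPoint c G :=
  le_csSup ⟨1, fun _ hv => hv.1.2⟩ ⟨hu, huG⟩

theorem crossingPoint_le_mul_apply (hc : 0 ≤ c) (hG : AntitoneOn G (Icc 0 1)) {u : ℝ}
    (hu : u ∈ Icc (0 : ℝ) 1) (huG : u ≤ c * G u) : crossingPoint c G ≤ c * G u :=
  sSup_sep_le_apply_of_antitoneOn (fun _ ha _ hb hab => mul_le_mul_of_nonneg_left (hG ha hb hab) hc)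
    hu huG

theorem ite_inv_le_ite_div_crossingPoint (hc : 0 ≤ c) (hGpos : ∀ u ∈ Icc (0 : ℝ) 1, 0 < G u)
    (hG : AntitoneOn G (Icc 0 1)) {u : ℝ} (hu : u ∈ Icc (0 : ℝ) 1) (hu0 : 0 < u) :
    (if u ≤ c * G u then (G u)⁻¹ else 0)
      ≤ if u ≤ crossingPoint c G then c / crossingPoint c G else 0 := by
  by_cases huG : u ≤ c * G u
  · have hut := le_crossingPoint hu huG
    rw [if_pos huG, if_pos hut]
    exact inv_le_div_of_le_mul (hGpos u hu) (hu0.trans_le hut)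
      (crossingPoint_le_mul_apply hc hG hu huG)
  · rw [if_neg huG]
    split_ifs
    exacts [div_nonneg hc crossingPoint_mem_Icc.1, le_rfl]

end CrossingPoint

/-- Extension of Lemma 3.2 of Blanchard and Roquain (2008): if `U` is a `[0,1]`-valued
random variable with `ℙ(U ≤ t) ≤ M·t` for `t ∈ [0,1]`, `G` is a positive non-increasing
function on `[0,1]`, and `c > 0`, then `E[1{U ≤ c·G(U)}/G(U)] ≤ c·M`. -/
theorem fdr_indicator_bound
    {Ω : Type*} [MeasurableSpace Ω] (ℙ : Measure Ω) [IsProbabilityMeasure ℙ]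
    (M : ℝ) (hM : 0 ≤ M)
    (U : Ω → ℝ) (hUmeas : Measurable U) (hU01 : ∀ ω, U ω ∈ Set.Icc (0 : ℝ) 1)
    (hcdf : ∀ t ∈ Set.Icc (0 : ℝ) 1, (ℙ {ω | U ω ≤ t}).toReal ≤ M * t)
    (G : ℝ → ℝ) (hGpos : ∀ u ∈ Set.Icc (0 : ℝ) 1, 0 < G u)
    (hGanti : AntitoneOn G (Set.Icc (0 : ℝ) 1))
    (c : ℝ) (hc : 0 < c) :
    ∫ ω, (if U ω ≤ c * G (U ω) then (G (U ω))⁻¹ else 0) ∂ℙ ≤ c * M := by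
  set t := crossingPoint c G
  have ht : t ∈ Icc (0 : ℝ) 1 := crossingPoint_mem_Icc
  have hU_pos : ∀ᵐ ω ∂ℙ, 0 < U ω :=
    ae_lt_of_measureReal_setOf_le_nonpos ((hcdf 0 ⟨le_rfl, zero_le_one⟩).trans_eq (mul_zero M))
  have hbound : ∀ᵐ ω ∂ℙ, (if U ω ≤ c * G (U ω) then (G (U ω))⁻¹ else 0)
      ≤ {ω | U ω ≤ t}.indicator (fun _ => c / t) ω := by
    filter_upwards [hU_pos] with ω hω
    exact ite_inv_le_ite_div_crossingPoint hc.le hGpos hGanti (hU01 ω) hω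
  have hnonneg : ∀ᵐ ω ∂ℙ, 0 ≤ (if U ω ≤ c * G (U ω) then (G (U ω))⁻¹ else 0) :=
    .of_forall fun ω => by
      split_ifs
      exacts [(inv_pos.mpr (hGpos _ (hU01 ω))).le, le_rfl]
  calc _ ≤ ℙ.real {ω | U ω ≤ t} * (c / t) :=
        integral_le_measureReal_mul_of_ae_le_indicator (hUmeas measurableSet_Iic) hnonneg hbound
    _ ≤ M * t * (c / t) := mul_le_mul_of_nonneg_right (hcdf t ht) (div_nonneg hc.le ht.1)
    _ ≤ c * M := by
        rcases ht.1.eq_or_lt with h0 | hpos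
        · rw [← h0, mul_zero, zero_mul]
          positivity
        · rw [mul_assoc, mul_div_cancel₀ c hpos.ne', mul_comm]
end

section
/- Let B₁, …, B_n be independent random variables on a probability space, each taking values in {0,1}, let S ⊆ {1,…,n}, and suppose there exists P₀ > 0 such that ℙ(B_k = 0) = P₀ for every k ∈ S. Set R = Σ_{i=1}^n B_i and, for each k, R^{(−k)} = R − B_k (so that R^{(−k)} ∈ {0,1,…,n−1} and n − R^{(−k)} ≥ 1). Then for every function h : {0,1,…,n} → [0,∞), Σ_{k∈S} E[ h(R^{(−k)}) / (n − R^{(−k)}) ] ≤ (1/P₀) · E[ h(R) ]. -/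
/-!
Put `φ r = h r / (n - r)`. The leave-one-out count `R - B_k = ∑_{i ≠ k} B_i` is independent of
`B_k` and equals `R` on `{B_k = 0}`, so `P₀ · E[φ(R - B_k)] = E[1{B_k = 0} φ(R)]`. Summing over
`k ∈ S`, pointwise `∑_{k ∈ S} 1{B_k = 0} ≤ #{i | B_i = 0} = n - R`, hence
`∑_{k ∈ S} 1{B_k = 0} φ(R) ≤ h(R)`.
-/

open MeasureTheory Finset

section Counting

variable {ι : Type*} [Fintype ι] {b : ι → ℕ}

theorem card_filter_eq_zero_add_sum_of_le_one (hb : ∀ i, b i ≤ 1) :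
    #{i | b i = 0} + ∑ i, b i = Fintype.card ι := by
  rw [card_filter, ← sum_add_distrib, ← card_univ, card_eq_sum_ones]
  refine sum_congr rfl fun i _ => ?_
  have := hb i
  split_ifs <;> omega

theorem sum_ite_eq_zero_div_card_sub_sum_le (hb : ∀ i, b i ≤ 1) (S : Finset ι) {x : ℝ}
    (hx : 0 ≤ x) :
    ∑ k ∈ S, (if b k = 0 then x / ((Fintype.card ι : ℝ) - ∑ i, b i) else 0) ≤ x := by
  have hcard : (#{i | b i = 0} : ℝ) = (Fintype.card ι : ℝ) - ∑ i, b i := by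
    rw [eq_sub_iff_add_eq]
    exact_mod_cast card_filter_eq_zero_add_sum_of_le_one hb
  have hS : (#{k ∈ S | b k = 0} : ℝ) ≤ #{i | b i = 0} := by
    exact_mod_cast card_le_card (filter_subset_filter _ (subset_univ S))
  rw [sum_ite, sum_const_zero, add_zero, sum_const, nsmul_eq_mul, ← hcard, ← mul_div_assoc,
    mul_div_right_comm]
  exact mul_le_of_le_one_left hx (div_le_one_of_le₀ hS (Nat.cast_nonneg _))

end Counting

section Probability

open ProbabilityTheory

variable {Ω : Type*} [MeasurableSpace Ω] {μ : Measure Ω}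

theorem integrable_comp_of_le [IsFiniteMeasure μ] {X : Ω → ℕ} (hX : Measurable X) {n : ℕ}
    (hXn : ∀ ω, X ω ≤ n) (g : ℕ → ℝ) :
    Integrable (fun ω => g (X ω)) μ := by
  refine .of_bound (measurable_from_top.comp hX).aestronglyMeasurable
    (∑ r ∈ range (n + 1), ‖g r‖) (ae_of_all _ fun ω => ?_)
  exact single_le_sum (fun r _ => norm_nonneg (g r)) (mem_range.2 (Nat.lt_succ_of_le (hXn ω)))

theorem ProbabilityTheory.IndepFun.setIntegral_comp_add_eq_measureReal_mul {X Y : Ω → ℕ}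
    (hX : Measurable X) (hY : Measurable Y) (hXY : IndepFun X Y μ) (g : ℕ → ℝ) :
    ∫ ω in {ω | Y ω = 0}, g (Y ω + X ω) ∂μ = μ.real {ω | Y ω = 0} * ∫ ω, g (X ω) ∂μ := by
  have hzero : MeasurableSet {ω | Y ω = 0} := hY (measurableSet_singleton 0)
  have hind : IndepFun (fun ω => g (X ω)) ({ω | Y ω = 0}.indicator (1 : Ω → ℝ)) μ := by
    have : {ω | Y ω = 0}.indicator (1 : Ω → ℝ) = ({0} : Set ℕ).indicator 1 ∘ Y := by
      ext ω
      by_cases hω : Y ω = 0 <;> simp [hω]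
    rw [this]
    exact hXY.comp measurable_from_top measurable_from_top
  calc ∫ ω in {ω | Y ω = 0}, g (Y ω + X ω) ∂μ
      = ∫ ω, ((fun ω => g (X ω)) * {ω | Y ω = 0}.indicator (1 : Ω → ℝ)) ω ∂μ := by
        rw [← integral_indicator hzero]
        congr 1
        ext ω
        by_cases hω : Y ω = 0 <;> simp [hω]
    _ = μ.real {ω | Y ω = 0} * ∫ ω, g (X ω) ∂μ := by
        rw [hind.integral_mul_eq_mul_integral
          (measurable_from_top.comp hX).aestronglyMeasurable
          ((measurable_one.indicator hzero).aestronglyMeasurable),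
          integral_indicator_one hzero, mul_comm]

theorem ProbabilityTheory.iIndepFun.measureReal_mul_integral_comp_sum_sub {ι : Type*}
    [Fintype ι] [DecidableEq ι] {B : ι → Ω → ℕ} (hB : iIndepFun B μ) (hmeas : ∀ i, Measurable (B i))
    (k : ι) (g : ℕ → ℝ) :
    μ.real {ω | B k ω = 0} * ∫ ω, g (∑ i, B i ω - B k ω) ∂μ
      = ∫ ω in {ω | B k ω = 0}, g (∑ i, B i ω) ∂μ := by
  have hsplit : ∀ ω, ∑ i, B i ω = B k ω + ∑ i ∈ univ.erase k, B i ω := fun ω =>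
    (add_sum_erase _ _ (mem_univ k)).symm
  have hrest : IndepFun (fun ω => ∑ i ∈ univ.erase k, B i ω) (B k) μ := by
    convert hB.indepFun_finsetSum_of_notMem hmeas (notMem_erase k univ)
    simp
  simp only [hsplit, Nat.add_sub_cancel_left]
  exact (hrest.setIntegral_comp_add_eq_measureReal_mul
    (Finset.measurable_sum _ fun i _ => hmeas i) (hmeas k) g).symm

end Probability

/-- Abstract form of the paper's Lemma 1 (extending Lemma 1 of Nandi and Sarkar (2018)):
for independent `{0,1}`-valued random variables `B₁,…,Bₙ` with `ℙ(B_k = 0) = P₀ > 0` for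
`k ∈ S`, `R = Σ Bᵢ` and `R⁽⁻ᵏ⁾ = R − B_k`, one has, for any nonnegative `h`,
`Σ_{k∈S} E[h(R⁽⁻ᵏ⁾)/(n − R⁽⁻ᵏ⁾)] ≤ (1/P₀)·E[h(R)]`. -/
theorem leave_one_out_expectation_bound
    {Ω : Type*} [MeasurableSpace Ω] (ℙ : Measure Ω) [IsProbabilityMeasure ℙ]
    (n : ℕ) (B : Fin n → Ω → ℕ)
    (hmeas : ∀ i, Measurable (B i))
    (hval : ∀ i ω, B i ω = 0 ∨ B i ω = 1)
    (hindep : ProbabilityTheory.iIndepFun B ℙ)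
    (S : Finset (Fin n)) (P₀ : ℝ) (hP₀ : 0 < P₀)
    (hnull : ∀ k ∈ S, (ℙ {ω | B k ω = 0}).toReal = P₀)
    (h : ℕ → ℝ) (hh : ∀ r, 0 ≤ h r) :
    ∑ k ∈ S, ∫ ω, h ((∑ i, B i ω) - B k ω) / ((n : ℝ) - (((∑ i, B i ω) - B k ω : ℕ) : ℝ)) ∂ℙ
      ≤ (1 / P₀) * ∫ ω, h (∑ i, B i ω) ∂ℙ := by
  set R : Ω → ℕ := fun ω => ∑ i, B i ω
  set φ : ℕ → ℝ := fun r => h r / ((n : ℝ) - r)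
  have hB : ∀ i ω, B i ω ≤ 1 := fun i ω => by rcases hval i ω with h0 | h0 <;> omega
  have hRmeas : Measurable R := Finset.measurable_sum _ fun i _ => hmeas i
  have hRn : ∀ ω, R ω ≤ n := fun ω => by
    simpa using sum_le_sum fun i (_ : i ∈ univ) => hB i ω
  have hzero : ∀ k, MeasurableSet {ω | B k ω = 0} := fun k => hmeas k (measurableSet_singleton 0)
  have hloo : ∀ k ∈ S, ∫ ω, φ (R ω - B k ω) ∂ℙ
      = 1 / P₀ * ∫ ω, {ω | B k ω = 0}.indicator (fun ω => φ (R ω)) ω ∂ℙ := fun k hk => by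
    rw [integral_indicator (hzero k), ← hindep.measureReal_mul_integral_comp_sum_sub hmeas k φ,
      measureReal_def, hnull k hk]
    field_simp
    rfl
  have hint : ∀ k, Integrable ({ω | B k ω = 0}.indicator fun ω => φ (R ω)) ℙ := fun k =>
    (integrable_comp_of_le hRmeas hRn φ).indicator (hzero k)
  have hpoint : ∀ ω, ∑ k ∈ S, {ω | B k ω = 0}.indicator (fun ω => φ (R ω)) ω ≤ h (R ω) :=
    fun ω => by
      simpa [Set.indicator_apply, φ, R] using
        sum_ite_eq_zero_div_card_sub_sum_le (fun i => hB i ω) S (hh (R ω))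
  calc ∑ k ∈ S, ∫ ω, φ (R ω - B k ω) ∂ℙ
      = 1 / P₀ * ∫ ω, ∑ k ∈ S, {ω | B k ω = 0}.indicator (fun ω => φ (R ω)) ω ∂ℙ := by
        rw [integral_finsetSum S fun k _ => hint k, mul_sum]
        exact sum_congr rfl hloo
    _ ≤ 1 / P₀ * ∫ ω, h (R ω) ∂ℙ := by
        refine mul_le_mul_of_nonneg_left ?_ (by positivity)
        exact integral_mono (integrable_finsetSum S fun k _ => hint k)
          (integrable_comp_of_le hRmeas hRn h) hpoint
end

section
/- For every x ≥ 0, 1 − Φ(x) > 2·φ(x) / (√(4 + x²) + x). -/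
open MeasureTheory

/-- The standard normal cumulative distribution function. -/
noncomputable def Phi (x : ℝ) : ℝ :=
  (ProbabilityTheory.gaussianReal 0 1 (Set.Iic x)).toReal

/-- The standard normal density. -/
noncomputable def phi (x : ℝ) : ℝ :=
  Real.exp (-x ^ 2 / 2) / Real.sqrt (2 * Real.pi)

/-! Put `r(x) = 2 / (√(4 + x²) + x)`, the positive root of `r² + x r = 1`, so that
`2 r + x = √(4 + x²)` and `r' = -r / √(4 + x²)`. The gap `g = 1 - Φ - φ r` then has
`g' = φ (x r - 1 + r / √(4 + x²)) = -φ r³ / √(4 + x²) < 0`, and `g → 0` at `+∞`,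
so `g > 0` everywhere. -/

open Real Filter Set ProbabilityTheory Topology

theorem StrictAnti.lt_of_tendsto {α β : Type*} [TopologicalSpace α] [Preorder α]
    [OrderClosedTopology α] [PartialOrder β] [IsDirectedOrder β] [NoMaxOrder β] {f : β → α}
    {a : α} (hf : StrictAnti f) (ha : Tendsto f atTop (𝓝 a)) (b : β) : a < f b := by
  obtain ⟨c, hbc⟩ := exists_gt b
  exact (hf.antitone.le_of_tendsto ha c).trans_lt (hf hbc)

lemma phi_eq_gaussianPDFReal : phi = gaussianPDFReal 0 1 := by
  funext x
  simp [gaussianPDFReal, phi, div_eq_inv_mul, mul_comm]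

lemma phi_pos (x : ℝ) : 0 < phi x := by
  rw [phi_eq_gaussianPDFReal]
  exact gaussianPDFReal_pos 0 1 x one_ne_zero

lemma continuous_phi : Continuous phi := by
  unfold phi
  fun_prop

lemma integrable_phi : Integrable phi := by
  rw [phi_eq_gaussianPDFReal]
  exact integrable_gaussianPDFReal 0 1

lemma hasDerivAt_phi (x : ℝ) : HasDerivAt phi (-x * phi x) x := by
  have h : HasDerivAt (fun y : ℝ => -y ^ 2 / 2) (-x) x := by
    simpa [neg_div] using (hasDerivAt_pow 2 x).neg.div_const 2
  exact (h.exp.div_const (√(2 * π))).congr_deriv (by simp only [phi]; ring)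

lemma tendsto_phi_atTop : Tendsto phi atTop (𝓝 0) := by
  have h : Tendsto (fun x : ℝ => -x ^ 2 / 2) atTop atBot :=
    (tendsto_neg_atTop_atBot.comp (tendsto_pow_atTop two_ne_zero)).atBot_div_const two_pos
  have h' := (tendsto_exp_atBot.comp h).div_const (√(2 * π))
  rwa [zero_div] at h'

lemma Phi_eq_cdf : Phi = cdf (gaussianReal 0 1) := by
  funext x
  rw [cdf_eq_real, measureReal_def, Phi]

lemma Phi_eq_setIntegral_phi (x : ℝ) : Phi x = ∫ t in Iic x, phi t := by
  rw [Phi, gaussianReal_apply_eq_integral 0 one_ne_zero, ← phi_eq_gaussianPDFReal,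
    ENNReal.toReal_ofReal (setIntegral_nonneg measurableSet_Iic fun t _ => (phi_pos t).le)]

lemma hasDerivAt_Phi (x : ℝ) : HasDerivAt Phi (phi x) x := by
  have h : ∀ y, Phi y = Phi 0 + ∫ t in (0 : ℝ)..y, phi t := fun y => by
    rw [Phi_eq_setIntegral_phi, Phi_eq_setIntegral_phi,
      ← intervalIntegral.integral_Iic_sub_Iic integrable_phi.integrableOn integrable_phi.integrableOn]
    ring
  rw [funext h]
  exact (intervalIntegral.integral_hasDerivAt_right integrable_phi.intervalIntegrable
    (continuous_phi.stronglyMeasurableAtFilter _ _) continuous_phi.continuousAt).const_add _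

noncomputable def birnbaumRatio (x : ℝ) : ℝ := 2 / (√(4 + x ^ 2) + x)

lemma sqrt_four_add_sq_add_pos (x : ℝ) : 0 < √(4 + x ^ 2) + x := by
  have h : |x| < √(4 + x ^ 2) := by
    rw [← sqrt_sq_eq_abs]
    exact sqrt_lt_sqrt (sq_nonneg x) (by linarith)
  linarith [neg_abs_le x]

lemma birnbaumRatio_pos (x : ℝ) : 0 < birnbaumRatio x :=
  div_pos two_pos (sqrt_four_add_sq_add_pos x)

lemma birnbaumRatio_eq (x : ℝ) : birnbaumRatio x = (√(4 + x ^ 2) - x) / 2 := by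
  have hs := sqrt_four_add_sq_add_pos x
  rw [birnbaumRatio, div_eq_div_iff hs.ne' two_ne_zero]
  linear_combination -sq_sqrt (show 0 ≤ 4 + x ^ 2 by positivity)

lemma two_mul_birnbaumRatio_add (x : ℝ) : 2 * birnbaumRatio x + x = √(4 + x ^ 2) := by
  rw [birnbaumRatio_eq]
  ring

lemma birnbaumRatio_mul_add_self (x : ℝ) : birnbaumRatio x * (birnbaumRatio x + x) = 1 := by
  rw [birnbaumRatio_eq]
  linear_combination sq_sqrt (show 0 ≤ 4 + x ^ 2 by positivity) / 4

lemma hasDerivAt_birnbaumRatio (x : ℝ) :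
    HasDerivAt birnbaumRatio (-(birnbaumRatio x / √(4 + x ^ 2))) x := by
  have hs : √(4 + x ^ 2) ≠ 0 := by positivity
  have h := ((((hasDerivAt_pow 2 x).const_add 4).sqrt (by positivity)).sub
    (hasDerivAt_id x)).div_const 2
  refine (h.congr_deriv ?_).congr_of_eventuallyEq (Eventually.of_forall birnbaumRatio_eq)
  rw [birnbaumRatio_eq]
  field_simp
  norm_num
  ring

lemma tendsto_birnbaumRatio_atTop : Tendsto birnbaumRatio atTop (𝓝 0) :=
  tendsto_const_nhds.div_atTop <| tendsto_atTop_mono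
    (fun _ => le_add_of_nonneg_left (sqrt_nonneg _)) tendsto_id

noncomputable def birnbaumGap (x : ℝ) : ℝ := 1 - Phi x - phi x * birnbaumRatio x

lemma hasDerivAt_birnbaumGap (x : ℝ) :
    HasDerivAt birnbaumGap (-(phi x * birnbaumRatio x ^ 3 / √(4 + x ^ 2))) x := by
  refine (((hasDerivAt_Phi x).const_sub 1).sub
    ((hasDerivAt_phi x).mul (hasDerivAt_birnbaumRatio x))).congr_deriv ?_
  have hs : √(4 + x ^ 2) ≠ 0 := by positivity
  field_simp
  rw [← two_mul_birnbaumRatio_add]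
  linear_combination (phi x * (birnbaumRatio x + x)) * birnbaumRatio_mul_add_self x

lemma strictAnti_birnbaumGap : StrictAnti birnbaumGap := by
  refine strictAnti_of_hasDerivAt_neg hasDerivAt_birnbaumGap fun x => neg_neg_of_pos ?_
  exact div_pos (mul_pos (phi_pos x) (pow_pos (birnbaumRatio_pos x) 3)) (by positivity)

lemma tendsto_birnbaumGap_atTop : Tendsto birnbaumGap atTop (𝓝 0) := by
  have h := ((tendsto_cdf_atTop (gaussianReal 0 1)).const_sub 1).sub
    (tendsto_phi_atTop.mul tendsto_birnbaumRatio_atTop)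
  rw [← Phi_eq_cdf, sub_self, mul_zero, sub_zero] at h
  exact h

theorem birnbaum_tail_bound_general (x : ℝ) :
    2 * phi x / (Real.sqrt (4 + x ^ 2) + x) < 1 - Phi x := by
  have h := strictAnti_birnbaumGap.lt_of_tendsto tendsto_birnbaumGap_atTop x
  rwa [birnbaumGap, sub_pos, birnbaumRatio, mul_div_assoc', mul_comm] at h

/-- Birnbaum's (1942) lower bound on the Gaussian tail:
for every `x ≥ 0`, `1 − Φ(x) > 2·φ(x)/(√(4 + x²) + x)`. -/
theorem birnbaum_tail_bound (x : ℝ) (hx : 0 ≤ x) :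
    2 * phi x / (Real.sqrt (4 + x ^ 2) + x) < 1 - Phi x :=
  birnbaum_tail_bound_general x
end

section
/- For every a > 1, every b < 0, and every x ≥ 0, −(1/2)·((a−1)·x + b)·(√(4 + x²) + x) ≤ (4·(a−1)² + b²) / (4·(a−1)), with equality when x = (4(a−1)² − b²)/(2(a−1)b) (provided this value is nonnegative). -/
/-!
Write `c = a - 1` and substitute `s = √(4 + x²) + x`, which satisfies `s (s - 2x) = 4`.
In terms of `s` the function becomes the concave quadratic
`(4c² + b²)/(4c) - (c s + b)²/(4c)`, so its value never exceeds `(4c² + b²)/(4c)` and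
reaches it exactly when `s = -b/c`. The substitution is inverted by `x = s/2 - 2/s`, which
for `s = -b/c` is the stated maximiser `(4c² - b²)/(2cb)`.
-/

lemma sqrt_four_add_sq_add_self_mul (x : ℝ) :
    (√(4 + x ^ 2) + x) * (√(4 + x ^ 2) + x - 2 * x) = 4 := by
  linear_combination Real.sq_sqrt (by positivity : (0 : ℝ) ≤ 4 + x ^ 2)

lemma neg_half_mul_eq_sub_sq_of_mul_sub_eq {b c x s : ℝ} (hc : c ≠ 0)
    (hs : s * (s - 2 * x) = 4) :
    -(1 / 2) * (c * x + b) * s = (4 * c ^ 2 + b ^ 2) / (4 * c) - (c * s + b) ^ 2 / (4 * c) := by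
  field_simp
  linear_combination 2 * c ^ 2 * hs

lemma sqrt_four_add_sq_half_sub_inv {t : ℝ} (ht : 0 < t) :
    √(4 + (t / 2 - 2 / t) ^ 2) = t / 2 + 2 / t := by
  rw [show 4 + (t / 2 - 2 / t) ^ 2 = (t / 2 + 2 / t) ^ 2 by field_simp; ring]
  exact Real.sqrt_sq (by positivity)

/-- Maximization of `f₁(x) = −(1/2)((a−1)x + b)(√(4 + x²) + x)` for `a > 1`, `b < 0`:
for every `x ≥ 0`, `f₁(x) ≤ (4(a−1)² + b²)/(4(a−1))`, with equality when
`x = (4(a−1)² − b²)/(2(a−1)b)`, provided this value is nonnegative. -/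
theorem f1_max (a b : ℝ) (ha : 1 < a) (hb : b < 0) :
    (∀ x : ℝ, 0 ≤ x →
      -(1 / 2) * ((a - 1) * x + b) * (Real.sqrt (4 + x ^ 2) + x)
        ≤ (4 * (a - 1) ^ 2 + b ^ 2) / (4 * (a - 1))) ∧
    (0 ≤ (4 * (a - 1) ^ 2 - b ^ 2) / (2 * (a - 1) * b) →
      -(1 / 2) * ((a - 1) * ((4 * (a - 1) ^ 2 - b ^ 2) / (2 * (a - 1) * b)) + b) *
          (Real.sqrt (4 + ((4 * (a - 1) ^ 2 - b ^ 2) / (2 * (a - 1) * b)) ^ 2)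
            + (4 * (a - 1) ^ 2 - b ^ 2) / (2 * (a - 1) * b))
        = (4 * (a - 1) ^ 2 + b ^ 2) / (4 * (a - 1))) := by
  have hc : 0 < a - 1 := sub_pos.mpr ha
  have hf (x : ℝ) := neg_half_mul_eq_sub_sq_of_mul_sub_eq (b := b) hc.ne'
    (sqrt_four_add_sq_add_self_mul x)
  refine ⟨fun x _ => ?_, fun _ => ?_⟩
  · rw [hf x]
    exact sub_le_self _ (by positivity)
  · set t := -b / (a - 1) with ht
    have ht_pos : 0 < t := div_pos (neg_pos.mpr hb) hc
    have hx₀ : (4 * (a - 1) ^ 2 - b ^ 2) / (2 * (a - 1) * b) = t / 2 - 2 / t := by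
      rw [ht]; field_simp; ring
    have hs : √(4 + (t / 2 - 2 / t) ^ 2) + (t / 2 - 2 / t) = t := by
      rw [sqrt_four_add_sq_half_sub_inv ht_pos]; ring
    have hct : (a - 1) * t + b = 0 := by rw [ht]; field_simp; ring
    rw [hx₀, hf, hs, hct]
    simp
end
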